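/- Let n > 2 and let K_12 = (S_n ∪ {g_1}, S_n ∪ {m_1,m_2}, I) be the formal context in which (g,m) ∈ I iff g,m ∈ S_n and g ≠ m, or g = g_1 and m ∈ S_n, or g ∈ m_1' and m = m_1, or g ∈ m_2' and m = m_2, where m_1', m_2' ⊆ S_n satisfy m_1' ∪ m_2' = S_n, ∅ ⊊ m_1', m_2' ⊊ S_n, and m_1', m_2' are incomparable (m_1' ⊄ m_2' and m_2' ⊄ m_1'). Then |𝔅(K_12)| = 2^n + 2^{|m_1'|} + 2^{|m_2'|} − 2^{|m_1' ∩ m_2'|}. -/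

import Mathlib

/-- The intent (attribute derivation) of a set of objects. -/
def intentOf {G M : Type*} (I : G → M → Prop) (A : Set G) : Set M :=
  {m | ∀ g ∈ A, I g m}

/-- The extent (object derivation) of a set of attributes. -/
def extentOf {G M : Type*} (I : G → M → Prop) (B : Set M) : Set G :=
  {g | ∀ m ∈ B, I g m}

/-- The formal concepts of a context: pairs `(A, B)` with `A' = B` and `B' = A`. -/
def Concepts {G M : Type*} (I : G → M → Prop) : Set (Set G × Set M) :=
  {p | intentOf I p.1 = p.2 ∧ extentOf I p.2 = p.1}

/-- The context `K_12 = (S_n ∪ {g_1}, S_n ∪ {m_1, m_2}, I)` with prescribed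
extensions `m1, m2 ⊆ S_n` of the two extra attributes: objects are
`Fin n ⊕ Unit` (with `Sum.inr () = g_1`), attributes are `Fin n ⊕ Bool`
(with `Sum.inr false = m_1` and `Sum.inr true = m_2`); `(g, m) ∈ I` iff
`g, m ∈ S_n` and `g ≠ m`, or `g = g_1` and `m ∈ S_n`, or `g ∈ m_1'` and
`m = m_1`, or `g ∈ m_2'` and `m = m_2`. -/
def K12 (n : ℕ) (m1 m2 : Set (Fin n)) :
    (Fin n ⊕ Unit) → (Fin n ⊕ Bool) → Prop
  | Sum.inl g, Sum.inl m => g ≠ m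
  | Sum.inr _, Sum.inl _ => True
  | Sum.inl g, Sum.inr false => g ∈ m1
  | Sum.inl g, Sum.inr true => g ∈ m2
  | Sum.inr _, Sum.inr _ => False

/-! A concept is determined by its extent, which is `A` or `A ∪ {g₁}` for some `A ⊆ S_n`.
Since the incidence on `S_n × S_n` is `≠`, the intent of `A ∪ {g₁}` is `S_n \ A`, whose extent is
again `A ∪ {g₁}`: this gives `2^n` concepts. The intent of `A` is `S_n \ A` together with the
`m_i` such that `A ⊆ m_i'`, and its extent contains `g₁` unless one of them is present. So `A`
itself is an extent iff `A ⊆ m_1'` or `A ⊆ m_2'`, and these sets are counted by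
inclusion–exclusion. -/

theorem Set.ncard_powerset_union_add {α : Type*} [Finite α] (s t : Set α) :
    (𝒫 s ∪ 𝒫 t).ncard + 2 ^ (s ∩ t).ncard = 2 ^ s.ncard + 2 ^ t.ncard := by
  rw [← ncard_powerset, powerset_inter, ncard_union_add_ncard_inter, ncard_powerset,
    ncard_powerset]

theorem Set.forall_mem_ne_iff_notMem {α : Type*} {s : Set α} {a : α} :
    (∀ b ∈ s, b ≠ a) ↔ a ∉ s :=
  ⟨fun h ha => h a ha rfl, fun h _ hb hba => h (hba ▸ hb)⟩

theorem Set.forall_notMem_ne_iff_mem {α : Type*} {s : Set α} {a : α} :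
    (∀ b ∉ s, a ≠ b) ↔ a ∈ s :=
  ⟨fun h => by_contra fun ha => h a ha rfl, fun ha _ hb hab => hb (hab ▸ ha)⟩

namespace K12

variable {n : ℕ} (m1 m2 : Set (Fin n))

def extent (A : Set (Fin n)) (p : Prop) : Set (Fin n ⊕ Unit) :=
  {g | Sum.elim (· ∈ A) (fun _ => p) g}

def upperIntent (A : Set (Fin n)) : Set (Fin n ⊕ Bool) :=
  {m | Sum.elim (· ∉ A) (fun _ => False) m}

def lowerIntent (A : Set (Fin n)) : Set (Fin n ⊕ Bool) :=
  {m | Sum.elim (· ∉ A) (fun b => A ⊆ bif b then m2 else m1) m}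

theorem eq_extent (S : Set (Fin n ⊕ Unit)) : S = extent (Sum.inl ⁻¹' S) (Sum.inr () ∈ S) := by
  ext (j | ⟨⟩) <;> rfl

theorem extent_inj {A B : Set (Fin n)} {p q : Prop} :
    extent A p = extent B q ↔ A = B ∧ (p ↔ q) := by
  refine ⟨fun h => ⟨?_, Set.ext_iff.1 h (Sum.inr ())⟩, fun ⟨hAB, hpq⟩ => ?_⟩
  · ext j; exact Set.ext_iff.1 h (Sum.inl j)
  · rw [hAB, propext hpq]

theorem intentOf_extent_true (A : Set (Fin n)) :
    intentOf (K12 n m1 m2) (extent A True) = upperIntent A := by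
  ext (j | b) <;> simp [intentOf, extent, upperIntent, K12, Set.forall_mem_ne_iff_notMem]

theorem intentOf_extent_false (A : Set (Fin n)) :
    intentOf (K12 n m1 m2) (extent A False) = lowerIntent m1 m2 A := by
  ext (j | (_ | _)) <;>
    simp [intentOf, extent, lowerIntent, K12, Set.forall_mem_ne_iff_notMem, Set.subset_def]

theorem extentOf_upperIntent (A : Set (Fin n)) :
    extentOf (K12 n m1 m2) (upperIntent A) = extent A True := by
  ext (j | _) <;> simp [extentOf, extent, upperIntent, K12, Set.forall_notMem_ne_iff_mem]

theorem extentOf_lowerIntent (A : Set (Fin n)) :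
    extentOf (K12 n m1 m2) (lowerIntent m1 m2 A) = extent A (¬(A ⊆ m1 ∨ A ⊆ m2)) := by
  ext (j | _)
  · simpa [extentOf, extent, lowerIntent, K12, Set.forall_notMem_ne_iff_mem] using
      fun hj => ⟨fun h => h hj, fun h => h hj⟩
  · simp [extentOf, extent, lowerIntent, K12]

def concept : Set (Fin n) ⊕ ↥(𝒫 m1 ∪ 𝒫 m2) → Set (Fin n ⊕ Unit) × Set (Fin n ⊕ Bool)
  | .inl A => (extent A True, upperIntent A)
  | .inr A => (extent A False, lowerIntent m1 m2 A)

theorem concept_injective : (concept m1 m2).Injective := by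
  rintro (A | A) (B | B) h <;> obtain ⟨hAB, hpq⟩ := extent_inj.1 (congrArg Prod.fst h)
  · rw [hAB]
  · simp at hpq
  · simp at hpq
  · rw [Subtype.ext hAB]

theorem range_concept : Set.range (concept m1 m2) = Concepts (K12 n m1 m2) := by
  apply subset_antisymm
  · rintro _ ⟨A | ⟨A, hA⟩, rfl⟩
    · exact ⟨intentOf_extent_true m1 m2 A, extentOf_upperIntent m1 m2 A⟩
    · refine ⟨intentOf_extent_false m1 m2 A, ?_⟩
      show extentOf _ (lowerIntent m1 m2 A) = extent A False
      rw [extentOf_lowerIntent, extent_inj]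
      exact ⟨rfl, iff_false_intro (not_not_intro hA)⟩
  · rintro ⟨S, T⟩ ⟨hT, hS⟩
    dsimp only at hT hS
    subst hT
    rw [eq_extent S] at hS ⊢
    by_cases hg : Sum.inr () ∈ S
    · simp only [hg, intentOf_extent_true]
      exact ⟨.inl _, rfl⟩
    · simp only [hg, intentOf_extent_false, extentOf_lowerIntent, extent_inj, iff_false,
        not_not, true_and] at hS ⊢
      exact ⟨.inr ⟨_, hS⟩, rfl⟩

end K12

theorem stmt15_general (n : ℕ) (m1 m2 : Set (Fin n)) :
    Nat.card (Concepts (K12 n m1 m2)) =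
      2 ^ n + 2 ^ m1.ncard + 2 ^ m2.ncard - 2 ^ (m1 ∩ m2).ncard := by
  have hcount := Set.ncard_powerset_union_add m1 m2
  rw [← K12.range_concept, Nat.card_range_of_injective (K12.concept_injective m1 m2),
    Nat.card_sum, Nat.card_coe_set_eq, Nat.card_eq_fintype_card, Fintype.card_set,
    Fintype.card_fin]
  -- after casting to `ℤ`, `omega` would not know that the atom `2 ^ n` is nonnegative
  generalize 2 ^ n = N
  omega

/-- Let `n > 2` and `m_1', m_2' ⊆ S_n` with `m_1' ∪ m_2' = S_n`,
`∅ ⊊ m_1', m_2' ⊊ S_n`, and `m_1', m_2'` incomparable. Then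
`|𝔅(K_12)| = 2^n + 2^|m_1'| + 2^|m_2'| − 2^|m_1' ∩ m_2'|`. -/
theorem stmt15 (n : ℕ) (hn : 2 < n) (m1 m2 : Set (Fin n))
    (hcov : m1 ∪ m2 = Set.univ)
    (h1ne : m1.Nonempty) (h1pr : m1 ≠ Set.univ)
    (h2ne : m2.Nonempty) (h2pr : m2 ≠ Set.univ)
    (h12 : ¬ m1 ⊆ m2) (h21 : ¬ m2 ⊆ m1) :
    Nat.card (Concepts (K12 n m1 m2)) =
      2 ^ n + 2 ^ m1.ncard + 2 ^ m2.ncard - 2 ^ (m1 ∩ m2).ncard :=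
  stmt15_general n m1 m2
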